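/- For any nonnegative integer m and integers l, l' ≥ m, the normalized associated Legendre functions satisfy the orthonormality relation ∫_{-1}^{1} P̄^m_l(x) P̄^m_{l'}(x) dx = δ_{l l'}. -/

import Mathlib

/-!
Up to the constants in `nalf`, the integrand is the polynomial
`(1 - x²)^m · D^(l+m)(x² - 1)^l · D^(l'+m)(x² - 1)^l'`. Differentiating the equation
`(x² - 1) u'' = 2(l - k - 1) x u' + (k + 1)(2l - k) u` satisfied by `u = D^k (x² - 1)^l` gives
`((1 - x²)^(k+1) D^(l+k+1)(x² - 1)^l)' = -(l + k + 1)(l - k) (1 - x²)^k D^(l+k)(x² - 1)^l`, so one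
integration by parts (the boundary terms vanish at `x = ±1`) lowers `m` by one at the cost of the
factor `(l + m)(l - m + 1)`; altogether `m` drops to `0` at the cost of `(l + m)! / (l - m)!`.
For `m = 0`, move the `l` derivatives of `D^l (x² - 1)^l` onto the other factor: `±1` are roots of
order `l` of `(x² - 1)^l`, so no boundary terms appear. If `l > l'` the other factor becomes
`D^(l+l')(x² - 1)^l' = 0`; if `l = l'` it becomes the constant `(2l)!`, leaving the Wallis-type
integral `∫ (1 - x²)^l = 2^(2l+1) (l!)² / (2l + 1)!`.
-/

open scoped Nat

/-- The Legendre polynomial of degree `l`, via Rodrigues' formula. -/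
noncomputable def legendreP (l : ℕ) : ℝ → ℝ := fun x =>
  (1 / (2 ^ l * (l ! : ℝ))) * iteratedDeriv l (fun y : ℝ => (y ^ 2 - 1) ^ l) x

/-- The normalized associated Legendre function `P̄_l^m`. -/
noncomputable def nalf (m l : ℕ) : ℝ → ℝ := fun x =>
  Real.sqrt ((2 * l + 1) / 2 * ((l - m)! : ℝ) / ((l + m)! : ℝ)) *
    (1 - x ^ 2) ^ ((m : ℝ) / 2) * iteratedDeriv m (legendreP l) x

/-- The spectral (l²-operator) norm of a real matrix. -/
noncomputable def specNorm {α β : Type*} [Fintype α] [Fintype β] [DecidableEq α] [DecidableEq β]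
    (A : Matrix α β ℝ) : ℝ :=
  ‖LinearMap.toContinuousLinearMap (Matrix.toEuclideanLin A)‖

/-- The singular values of a real matrix, listed in decreasing order. -/
noncomputable def singularValues {p q : ℕ} (A : Matrix (Fin p) (Fin q) ℝ) : List ℝ :=
  List.insertionSort (· ≥ ·)
    (List.ofFn fun i => Real.sqrt ((Matrix.isHermitian_conjTranspose_mul_self A).eigenvalues i))

noncomputable def ccoef (m l : ℕ) : ℝ :=
  Real.sqrt ((((l : ℝ) - m + 1) * ((l : ℝ) - m + 2) * ((l : ℝ) + m + 1) * ((l : ℝ) + m + 2)) /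
    ((2 * (l : ℝ) + 1) * (2 * (l : ℝ) + 3) ^ 2 * (2 * (l : ℝ) + 5)))

noncomputable def dcoef (m l : ℕ) : ℝ :=
  (2 * (l : ℝ) * ((l : ℝ) + 1) - 2 * (m : ℝ) ^ 2 - 1) /
    ((2 * (l : ℝ) - 1) * (2 * (l : ℝ) + 3))

open Polynomial

section PolyIntegral

variable (a b : ℝ)

noncomputable def polyIntegral : ℝ[X] →ₗ[ℝ] ℝ where
  toFun p := ∫ x in a..b, p.eval x
  map_add' p q := by
    simp only [eval_add]
    exact intervalIntegral.integral_add (p.continuous.intervalIntegrable _ _)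
      (q.continuous.intervalIntegrable _ _)
  map_smul' r p := by
    simp only [eval_smul, smul_eq_mul, RingHom.id_apply]
    exact intervalIntegral.integral_const_mul _ _

lemma polyIntegral_apply (p : ℝ[X]) : polyIntegral a b p = ∫ x in a..b, p.eval x := rfl

lemma polyIntegral_C_mul (r : ℝ) (p : ℝ[X]) :
    polyIntegral a b (C r * p) = r * polyIntegral a b p := by
  rw [← smul_eq_C_mul, map_smul, smul_eq_mul]

lemma polyIntegral_derivative (p : ℝ[X]) :
    polyIntegral a b (derivative p) = p.eval b - p.eval a :=
  intervalIntegral.integral_eq_sub_of_hasDerivAt (fun x _ => p.hasDerivAt x)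
    ((derivative p).continuous.intervalIntegrable _ _)

lemma polyIntegral_derivative_mul (p q : ℝ[X]) :
    polyIntegral a b (derivative p * q) =
      p.eval b * q.eval b - p.eval a * q.eval a - polyIntegral a b (p * derivative q) := by
  have h := polyIntegral_derivative a b (p * q)
  rw [derivative_mul, map_add, eval_mul, eval_mul] at h
  linarith

end PolyIntegral

noncomputable def rodrigues (l k : ℕ) : ℝ[X] := derivative^[k] ((X ^ 2 - 1) ^ l)

lemma rodrigues_succ (l k : ℕ) : rodrigues l (k + 1) = derivative (rodrigues l k) :=
  Function.iterate_succ_apply' _ _ _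

lemma iterate_derivative_rodrigues (l j k : ℕ) :
    derivative^[j] (rodrigues l k) = rodrigues l (k + j) := by
  rw [add_comm, rodrigues, rodrigues, Function.iterate_add_apply]

lemma X_sq_sub_one_mul_rodrigues_one (l : ℕ) :
    (X ^ 2 - 1) * rodrigues l 1 = C (2 * l : ℝ) * X * rodrigues l 0 := by
  cases l with
  | zero => simp [rodrigues]
  | succ n =>
    simp only [rodrigues, Function.iterate_one, Function.iterate_zero_apply, derivative_pow,
      derivative_sub, derivative_one, derivative_X, map_mul, map_natCast, map_ofNat]
    push_cast
    ring

lemma X_sq_sub_one_mul_rodrigues_add_two (l k : ℕ) :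
    (X ^ 2 - 1) * rodrigues l (k + 2) =
      C (2 * l - 2 * k - 2 : ℝ) * X * rodrigues l (k + 1) +
        C ((k + 1) * (2 * l - k) : ℝ) * rodrigues l k := by
  induction k with
  | zero =>
    have h := congrArg derivative (X_sq_sub_one_mul_rodrigues_one l)
    simp only [derivative_mul, derivative_X_pow, derivative_one, derivative_X, derivative_natCast,
      derivative_ofNat, ← rodrigues_succ, map_add, map_sub, map_mul, map_natCast, map_ofNat,
      map_one] at h ⊢
    push_cast at h ⊢
    linear_combination h
  | succ k ih =>
    have h := congrArg derivative ih
    simp only [derivative_mul, derivative_X_pow, derivative_one, derivative_X, derivative_natCast,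
      derivative_ofNat, ← rodrigues_succ, map_add, map_sub, map_mul, map_natCast, map_ofNat,
      map_one] at h ⊢
    push_cast at h ⊢
    linear_combination h

lemma derivative_one_sub_X_sq_pow_mul_rodrigues (l k : ℕ) :
    derivative ((1 - X ^ 2) ^ (k + 1) * rodrigues l (l + k + 1)) =
      C (-((l + k + 1) * (l - k)) : ℝ) * ((1 - X ^ 2) ^ k * rodrigues l (l + k)) := by
  have key := X_sq_sub_one_mul_rodrigues_add_two l (l + k)
  rw [derivative_mul, derivative_pow, ← rodrigues_succ]
  simp only [derivative_one, derivative_X_pow, Nat.add_sub_cancel, map_neg,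
    map_mul, map_sub, map_add, map_natCast, map_ofNat, map_one] at key ⊢
  push_cast at key ⊢
  linear_combination (-(1 - X ^ 2) ^ k) * key

lemma rodrigues_eval_eq_zero {l k : ℕ} (hk : k < l) {x : ℝ} (hx : x ^ 2 = 1) :
    (rodrigues l k).eval x = 0 := by
  obtain ⟨q, hq⟩ :=
    pow_sub_dvd_iterate_derivative_of_pow_dvd k (dvd_refl ((X ^ 2 - 1 : ℝ[X]) ^ l))
  rw [rodrigues, hq]
  simp [hx, Nat.sub_ne_zero_of_lt hk]

lemma monic_X_sq_sub_one_pow (l : ℕ) : ((X ^ 2 - 1 : ℝ[X]) ^ l).Monic := by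
  simpa using (monic_X_pow_sub_C (1 : ℝ) two_ne_zero).pow l

lemma natDegree_X_sq_sub_one_pow (l : ℕ) : ((X ^ 2 - 1 : ℝ[X]) ^ l).natDegree = 2 * l := by
  rw [natDegree_pow, ← C_1, natDegree_X_pow_sub_C, mul_comm]

lemma rodrigues_eq_zero {l k : ℕ} (hk : 2 * l < k) : rodrigues l k = 0 :=
  iterate_derivative_eq_zero ((natDegree_X_sq_sub_one_pow l).trans_lt hk)

lemma rodrigues_two_mul (l : ℕ) : rodrigues l (2 * l) = C ((2 * l)! : ℝ) := by
  have hdeg : (rodrigues l (2 * l)).natDegree ≤ 0 := by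
    have := natDegree_iterate_derivative ((X ^ 2 - 1 : ℝ[X]) ^ l) (2 * l)
    rwa [natDegree_X_sq_sub_one_pow, Nat.sub_self] at this
  rw [eq_C_of_natDegree_le_zero hdeg, rodrigues, coeff_iterate_derivative, zero_add,
    Nat.descFactorial_self, ← natDegree_X_sq_sub_one_pow l,
    (monic_X_sq_sub_one_pow l).coeff_natDegree, nsmul_one]

lemma polyIntegral_weighted_rodrigues_succ (l l' k : ℕ) :
    polyIntegral (-1) 1 ((1 - X ^ 2) ^ (k + 1) *
        (rodrigues l (l + k + 1) * rodrigues l' (l' + k + 1))) =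
      ((l + k + 1) * (l - k) : ℝ) *
        polyIntegral (-1) 1 ((1 - X ^ 2) ^ k * (rodrigues l (l + k) * rodrigues l' (l' + k))) := by
  have h := polyIntegral_derivative_mul (-1) 1
    ((1 - X ^ 2) ^ (k + 1) * rodrigues l (l + k + 1)) (rodrigues l' (l' + k))
  rw [derivative_one_sub_X_sq_pow_mul_rodrigues, mul_assoc, polyIntegral_C_mul,
    ← rodrigues_succ] at h
  norm_num at h
  simpa only [mul_assoc] using h.symm

lemma factorial_mul_polyIntegral_weighted_rodrigues {l k : ℕ} (l' : ℕ) (hk : k ≤ l) :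
    ((l - k)! : ℝ) *
        polyIntegral (-1) 1 ((1 - X ^ 2) ^ k * (rodrigues l (l + k) * rodrigues l' (l' + k))) =
      (l + k)! * polyIntegral (-1) 1 (rodrigues l l * rodrigues l' l') := by
  induction k with
  | zero => simp
  | succ k ih =>
    have hfac : ((l - k)! : ℝ) = (l - k) * (l - (k + 1))! := by
      rw [show l - k = l - (k + 1) + 1 by omega, Nat.factorial_succ]
      push_cast [Nat.cast_sub hk]
      ring
    rw [← add_assoc, ← add_assoc, polyIntegral_weighted_rodrigues_succ, Nat.factorial_succ (l + k)]
    push_cast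
    linear_combination ((l : ℝ) + k + 1) * ih (by omega) - ((l : ℝ) + k + 1) *
      polyIntegral (-1) 1 ((1 - X ^ 2) ^ k * (rodrigues l (l + k) * rodrigues l' (l' + k))) * hfac

lemma polyIntegral_rodrigues_mul (l : ℕ) (q : ℝ[X]) {j : ℕ} (hj : j ≤ l) :
    polyIntegral (-1) 1 (rodrigues l l * q) =
      (-1) ^ j * polyIntegral (-1) 1 (rodrigues l (l - j) * derivative^[j] q) := by
  induction j with
  | zero => simp
  | succ j ih =>
    have h := polyIntegral_derivative_mul (-1) 1 (rodrigues l (l - (j + 1))) (derivative^[j] q)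
    rw [← rodrigues_succ, show l - (j + 1) + 1 = l - j by omega,
      rodrigues_eval_eq_zero (by omega) (by norm_num),
      rodrigues_eval_eq_zero (by omega) (by norm_num),
      ← Function.iterate_succ_apply' derivative j q] at h
    rw [ih (by omega), h, pow_succ]
    ring

lemma polyIntegral_rodrigues_mul_rodrigues_of_lt {l l' : ℕ} (h : l' < l) :
    polyIntegral (-1) 1 (rodrigues l l * rodrigues l' l') = 0 := by
  rw [polyIntegral_rodrigues_mul l _ le_rfl, iterate_derivative_rodrigues,
    rodrigues_eq_zero (l := l') (by omega), mul_zero, map_zero, mul_zero]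

lemma polyIntegral_rodrigues_mul_rodrigues_of_ne {l l' : ℕ} (h : l ≠ l') :
    polyIntegral (-1) 1 (rodrigues l l * rodrigues l' l') = 0 := by
  rcases h.lt_or_gt with h | h
  · rw [mul_comm]
    exact polyIntegral_rodrigues_mul_rodrigues_of_lt h
  · exact polyIntegral_rodrigues_mul_rodrigues_of_lt h

lemma polyIntegral_one_sub_X_sq_pow_succ (l : ℕ) :
    (2 * l + 3 : ℝ) * polyIntegral (-1) 1 ((1 - X ^ 2) ^ (l + 1)) =
      (2 * l + 2) * polyIntegral (-1) 1 ((1 - X ^ 2) ^ l) := by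
  have hderiv : derivative (X * (1 - X ^ 2) ^ (l + 1) : ℝ[X]) =
      C (2 * l + 3 : ℝ) * (1 - X ^ 2) ^ (l + 1) - C (2 * l + 2 : ℝ) * (1 - X ^ 2) ^ l := by
    simp only [derivative_mul, derivative_X, derivative_pow, derivative_sub, derivative_one,
      Nat.add_sub_cancel, map_add, map_mul, map_natCast, map_ofNat]
    push_cast
    ring
  have h := polyIntegral_derivative (-1) 1 (X * (1 - X ^ 2) ^ (l + 1))
  rw [hderiv, map_sub, polyIntegral_C_mul, polyIntegral_C_mul] at h
  norm_num at h
  linarith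

lemma factorial_mul_polyIntegral_one_sub_X_sq_pow (l : ℕ) :
    ((2 * l + 1)! : ℝ) * polyIntegral (-1) 1 ((1 - X ^ 2) ^ l) =
      2 ^ (2 * l + 1) * (l ! : ℝ) ^ 2 := by
  induction l with
  | zero => norm_num [polyIntegral_apply]
  | succ l ih =>
    rw [show 2 * (l + 1) + 1 = 2 * l + 1 + 1 + 1 by ring, Nat.factorial_succ (2 * l + 1 + 1),
      Nat.factorial_succ (2 * l + 1), Nat.factorial_succ l]
    push_cast
    linear_combination (2 * (l : ℝ) + 2) * ((2 * l + 1)! : ℝ) * polyIntegral_one_sub_X_sq_pow_succ l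
      + (2 * (l : ℝ) + 2) ^ 2 * ih

lemma polyIntegral_rodrigues_mul_self (l : ℕ) :
    (2 * l + 1 : ℝ) * polyIntegral (-1) 1 (rodrigues l l * rodrigues l l) =
      2 ^ (2 * l + 1) * (l ! : ℝ) ^ 2 := by
  have hsign : rodrigues l 0 = C ((-1) ^ l : ℝ) * (1 - X ^ 2) ^ l := by
    rw [rodrigues, Function.iterate_zero_apply, map_pow, map_neg, map_one, ← mul_pow]
    ring
  have hsq : ((-1 : ℝ) ^ l) ^ 2 = 1 := by rw [← pow_mul, mul_comm, pow_mul, neg_one_sq, one_pow]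
  have hwallis := factorial_mul_polyIntegral_one_sub_X_sq_pow l
  rw [Nat.factorial_succ] at hwallis
  push_cast at hwallis
  rw [polyIntegral_rodrigues_mul l _ le_rfl, Nat.sub_self, iterate_derivative_rodrigues, ← two_mul,
    rodrigues_two_mul, hsign, mul_right_comm, ← map_mul, polyIntegral_C_mul]
  linear_combination hwallis + (2 * l + 1) * ((2 * l)! : ℝ) *
    polyIntegral (-1) 1 ((1 - X ^ 2) ^ l) * hsq

lemma iteratedDeriv_polynomial_eval (p : ℝ[X]) (n : ℕ) :
    iteratedDeriv n (fun x => p.eval x) = fun x => (derivative^[n] p).eval x := by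
  induction n with
  | zero => simp
  | succ n ih =>
    funext x
    rw [iteratedDeriv_succ, ih, Polynomial.deriv, Function.iterate_succ_apply']

lemma iteratedDeriv_legendreP (m l : ℕ) :
    iteratedDeriv m (legendreP l) =
      fun x => (2 ^ l * l ! : ℝ)⁻¹ * (rodrigues l (l + m)).eval x := by
  have hP : legendreP l = fun x => (C (2 ^ l * l ! : ℝ)⁻¹ * rodrigues l l).eval x := by
    funext x
    have h := iteratedDeriv_polynomial_eval ((X ^ 2 - 1) ^ l) l
    simp only [eval_pow, eval_sub, eval_X, eval_one] at h
    rw [legendreP, h, eval_mul, eval_C, one_div, rodrigues]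
  rw [hP, iteratedDeriv_polynomial_eval, iterate_derivative_C_mul, iterate_derivative_rodrigues]
  simp only [eval_mul, eval_C]

noncomputable def nalfCoeff (m l : ℕ) : ℝ :=
  Real.sqrt ((2 * l + 1) / 2 * ((l - m)! : ℝ) / ((l + m)! : ℝ)) / (2 ^ l * l !)

lemma nalfCoeff_mul_self (m l : ℕ) :
    nalfCoeff m l * nalfCoeff m l =
      (2 * l + 1) / 2 * ((l - m)! : ℝ) / ((l + m)! : ℝ) / (2 ^ l * l !) ^ 2 := by
  rw [nalfCoeff, div_mul_div_comm, Real.mul_self_sqrt (by positivity), sq]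

lemma nalf_mul_nalf_eqOn (m l l' : ℕ) :
    Set.EqOn (fun x => nalf m l x * nalf m l' x)
      (fun x => nalfCoeff m l * nalfCoeff m l' *
        ((1 - X ^ 2) ^ m * (rodrigues l (l + m) * rodrigues l' (l' + m))).eval x)
      (Set.uIcc (-1) 1) := by
  intro x hx
  rw [Set.uIcc_of_le (by norm_num)] at hx
  have hx2 : 0 ≤ 1 - x ^ 2 := by nlinarith [hx.1, hx.2]
  have hsq : (1 - x ^ 2) ^ ((m : ℝ) / 2) * (1 - x ^ 2) ^ ((m : ℝ) / 2) = (1 - x ^ 2) ^ m := by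
    rw [← Real.rpow_add_of_nonneg hx2 (by positivity) (by positivity), add_halves,
      Real.rpow_natCast]
  simp only [nalf, iteratedDeriv_legendreP, nalfCoeff, eval_mul, eval_pow, eval_sub, eval_one,
    eval_X, ← hsq]
  ring

theorem nalf_orthonormal_general (m l l' : ℕ) (hl : m ≤ l) :
    ∫ x in (-1 : ℝ)..1, nalf m l x * nalf m l' x = if l = l' then 1 else 0 := by
  rw [intervalIntegral.integral_congr (nalf_mul_nalf_eqOn m l l'),
    intervalIntegral.integral_const_mul, ← polyIntegral_apply]
  have hreduce := factorial_mul_polyIntegral_weighted_rodrigues l' hl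
  set I := polyIntegral (-1) 1 ((1 - X ^ 2) ^ m * (rodrigues l (l + m) * rodrigues l' (l' + m)))
  rcases eq_or_ne l l' with rfl | hne
  · have hnorm := polyIntegral_rodrigues_mul_self l
    set J := polyIntegral (-1) 1 (rodrigues l l * rodrigues l l)
    rw [if_pos rfl, nalfCoeff_mul_self, div_mul_eq_mul_div, div_eq_one_iff_eq (by positivity)]
    calc (2 * l + 1) / 2 * ((l - m)! : ℝ) / (l + m)! * I
        = (2 * l + 1) / 2 * (((l - m)! : ℝ) * I) / (l + m)! := by ring
      _ = (2 * l + 1) * J / 2 := by rw [hreduce]; field_simp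
      _ = (2 ^ l * l !) ^ 2 := by rw [hnorm]; ring
  · rw [polyIntegral_rodrigues_mul_rodrigues_of_ne hne, mul_zero] at hreduce
    rw [if_neg hne, (mul_eq_zero.1 hreduce).resolve_left (by positivity), mul_zero]

theorem nalf_orthonormal (m l l' : ℕ) (hl : m ≤ l) (hl' : m ≤ l') :
    ∫ x in (-1 : ℝ)..1, nalf m l x * nalf m l' x = if l = l' then 1 else 0 :=
  nalf_orthonormal_general m l l' hl
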